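/- arXiv:2405.11081 — 9 statements merged into one kernel-verified Lean document; each statement's English description precedes it below -/
import Mathlib

section
/- Equivalent weights under linear measurement models: Suppose a Gaussian mixture prior has N components with means x̄_1,…,x̄_N ∈ ℝⁿ, all sharing the same prior covariance P̄ (so that the prior and posterior innovation covariances S and Ŝ are the same for every component), and prior weights w_1,…,w_N ≥ 0 with at least one w_i > 0. For each component i define the Kalman-updated posterior mean x̂_i = x̄_i + K (y − H x̄_i). Then Ŝ is symmetric positive definite, and for every index i the posterior-linearization weight equals the prior-linearization weight: w_i · N(y; H x̂_i, Ŝ) / (∑_{j=1}^N w_j · N(y; H x̂_j, Ŝ)) = w_i · N(y; H x̄_i, S) / (∑_{j=1}^N w_j · N(y; H x̄_j, S)). -/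
open Matrix

/-- The Gaussian density `N(z; μ, Σ)` on `ℝᵈ`. -/
noncomputable def gaussPDF {d : ℕ} (z μ : Fin d → ℝ) (Sig : Matrix (Fin d) (Fin d) ℝ) : ℝ :=
  ((2 * Real.pi) ^ d * Sig.det) ^ (-(1 / 2 : ℝ)) *
    Real.exp (-(1 / 2 : ℝ) * ((z - μ) ⬝ᵥ (Sig⁻¹ *ᵥ (z - μ))))

/-!
Write `M = 1 - H K`. Since `K S = P̄ Hᵀ`, we get `M S = R`, so `M` is invertible, and expanding
the definitions gives `Ŝ = M S Mᵀ`: hence `Ŝ` is positive definite. The posterior residual is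
`y - H x̂ᵢ = M (y - H x̄ᵢ)`, so the Mahalanobis term of `N(y; H x̂ᵢ, Ŝ)` equals that of
`N(y; H x̄ᵢ, S)`. The two families of densities thus differ by the common factor
`(det Ŝ / det S)^(-1/2)`, which cancels in the normalized weights.
-/

namespace Matrix

variable {m n : Type*} [Fintype m] [Fintype n]

theorem PosDef.mul_mul_transpose_add {H : Matrix m n ℝ} {P : Matrix n n ℝ} {R : Matrix m m ℝ}
    (hP : P.PosSemidef) (hR : R.PosDef) : (H * P * Hᵀ + R).PosDef := by
  simpa only [conjTranspose_eq_transpose_of_trivial] using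
    PosDef.posSemidef_add (hP.mul_mul_conjTranspose_same H) hR

theorem PosDef.mul_mul_transpose_of_isUnit_det [DecidableEq m] {S M : Matrix m m ℝ}
    (hS : S.PosDef) (hM : IsUnit M.det) : (M * S * Mᵀ).PosDef := by
  simpa only [conjTranspose_eq_transpose_of_trivial] using
    hS.mul_mul_conjTranspose_same (vecMul_injective_iff_isUnit.2 ((isUnit_iff_isUnit_det M).2 hM))

theorem dotProduct_mulVec_mul_mul_transpose_inv [DecidableEq m] {α : Type*} [Field α]
    {M : Matrix m m α} (hM : IsUnit M.det) (A : Matrix m m α) (v : m → α) :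
    (M *ᵥ v) ⬝ᵥ ((M * A * Mᵀ)⁻¹ *ᵥ (M *ᵥ v)) = v ⬝ᵥ (A⁻¹ *ᵥ v) := by
  have hMt : IsUnit Mᵀ.det := by rwa [det_transpose]
  rw [mulVec_mulVec, dotProduct_mulVec, ← vecMul_transpose, vecMul_vecMul, ← dotProduct_mulVec,
    mul_inv_rev, mul_inv_rev, ← Matrix.mul_assoc, ← Matrix.mul_assoc,
    mul_nonsing_inv _ hMt, Matrix.one_mul, Matrix.mul_assoc, nonsing_inv_mul _ hM, Matrix.mul_one]

theorem sub_mulVec_add_mulVec_sub [DecidableEq m] {α : Type*} [CommRing α] (H : Matrix m n α)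
    (C : Matrix n m α) (x : n → α) (y : m → α) :
    y - H *ᵥ (x + C *ᵥ (y - H *ᵥ x)) = (1 - H * C) *ᵥ (y - H *ᵥ x) := by
  rw [mulVec_add, mulVec_mulVec, sub_mulVec, one_mulVec]
  abel

section KalmanUpdate

variable [DecidableEq m] {α : Type*} [CommRing α]
  {H : Matrix m n α} {P : Matrix n n α} {R S : Matrix m m α} {C : Matrix n m α}

theorem one_sub_mul_mul_eq (hS : S = H * P * Hᵀ + R) (hCS : C * S = P * Hᵀ) :
    (1 - H * C) * S = R := by
  rw [Matrix.sub_mul, Matrix.one_mul, Matrix.mul_assoc, hCS, ← Matrix.mul_assoc, hS,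
    add_sub_cancel_left]

theorem posterior_innovation_cov_eq (hR : Rᵀ = R) (hS : S = H * P * Hᵀ + R)
    (hCS : C * S = P * Hᵀ) :
    H * (P - C * H * P) * Hᵀ + R - H * C * R - (H * C * R)ᵀ =
      (1 - H * C) * S * (1 - H * C)ᵀ := by
  have hMS := one_sub_mul_mul_eq hS hCS
  have hprior : H * (P - C * H * P) * Hᵀ = (1 - H * C) * (S - R) := by
    rw [hS, add_sub_cancel_right]
    simp only [Matrix.mul_sub, Matrix.sub_mul, Matrix.one_mul, Matrix.mul_assoc]
  have hgain : H * C * R = R - (1 - H * C) * R := by noncomm_ring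
  rw [hprior, hMS, transpose_mul, hR, transpose_sub, transpose_one, hgain,
    Matrix.mul_sub (1 - H * C), hMS]
  noncomm_ring

end KalmanUpdate

end Matrix

theorem gaussPDF_eq_div_mul_gaussPDF {d : ℕ} {z μ z' μ' : Fin d → ℝ}
    {A B : Matrix (Fin d) (Fin d) ℝ} (hB : 0 < B.det)
    (h : (z - μ) ⬝ᵥ (A⁻¹ *ᵥ (z - μ)) = (z' - μ') ⬝ᵥ (B⁻¹ *ᵥ (z' - μ'))) :
    gaussPDF z μ A =
      ((2 * Real.pi) ^ d * A.det) ^ (-(1 / 2 : ℝ)) / ((2 * Real.pi) ^ d * B.det) ^ (-(1 / 2 : ℝ)) *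
        gaussPDF z' μ' B := by
  have hnorm : ((2 * Real.pi) ^ d * B.det) ^ (-(1 / 2 : ℝ)) ≠ 0 := by positivity
  rw [gaussPDF, gaussPDF, h, div_mul_eq_mul_div, mul_div_assoc, mul_div_cancel_left₀ _ hnorm]

theorem mul_const_mul_div_sum {ι 𝕜 : Type*} [Fintype ι] [Field 𝕜] (w f : ι → 𝕜) {c : 𝕜}
    (hc : c ≠ 0) (i : ι) :
    w i * (c * f i) / ∑ j, w j * (c * f j) = w i * f i / ∑ j, w j * f j := by
  simp only [mul_left_comm _ c, ← Finset.mul_sum, mul_div_mul_left _ _ hc]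

theorem equivalent_weights_linear_general
    (n m N : ℕ)
    (H : Matrix (Fin m) (Fin n) ℝ)
    (R : Matrix (Fin m) (Fin m) ℝ) (hR : R.PosDef)
    (Pbar : Matrix (Fin n) (Fin n) ℝ) (hPbar : Pbar.PosDef)
    (y : Fin m → ℝ)
    (xbar : Fin N → (Fin n → ℝ))
    (w : Fin N → ℝ)
    (S : Matrix (Fin m) (Fin m) ℝ) (hS : S = H * Pbar * Hᵀ + R)
    (K : Matrix (Fin n) (Fin m) ℝ) (hK : K = Pbar * Hᵀ * S⁻¹)
    (Phat : Matrix (Fin n) (Fin n) ℝ) (hPhat : Phat = Pbar - K * H * Pbar)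
    (Shat : Matrix (Fin m) (Fin m) ℝ)
    (hShat : Shat = H * Phat * Hᵀ + R - H * K * R - (H * K * R)ᵀ)
    (xhat : Fin N → (Fin n → ℝ))
    (hxhat : ∀ i, xhat i = xbar i + K *ᵥ (y - H *ᵥ xbar i)) :
    Shat.PosDef ∧
      ∀ i, w i * gaussPDF y (H *ᵥ xhat i) Shat /
          (∑ j, w j * gaussPDF y (H *ᵥ xhat j) Shat) =
        w i * gaussPDF y (H *ᵥ xbar i) S /
          (∑ j, w j * gaussPDF y (H *ᵥ xbar j) S) := by
  have hSpd : S.PosDef := hS ▸ PosDef.mul_mul_transpose_add hPbar.posSemidef hR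
  have hKS : K * S = Pbar * Hᵀ := by
    rw [hK, nonsing_inv_mul_cancel_right _ _ hSpd.det_pos.ne'.isUnit]
  have hRt : Rᵀ = R := (conjTranspose_eq_transpose_of_trivial R).symm.trans hR.isHermitian
  have hM : IsUnit (1 - H * K).det := by
    have hdet := congrArg det (one_sub_mul_mul_eq hS hKS)
    rw [det_mul] at hdet
    exact isUnit_of_mul_isUnit_left (hdet ▸ hR.det_pos.ne'.isUnit)
  have hShatM : Shat = (1 - H * K) * S * (1 - H * K)ᵀ := by
    rw [hShat, hPhat, posterior_innovation_cov_eq hRt hS hKS]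
  have hShatpd : Shat.PosDef := hShatM ▸ hSpd.mul_mul_transpose_of_isUnit_det hM
  refine ⟨hShatpd, fun i => ?_⟩
  obtain ⟨c, hc, hpdf⟩ : ∃ c ≠ 0, ∀ j,
      gaussPDF y (H *ᵥ xhat j) Shat = c * gaussPDF y (H *ᵥ xbar j) S := by
    refine ⟨((2 * Real.pi) ^ m * Shat.det) ^ (-(1 / 2 : ℝ)) /
      ((2 * Real.pi) ^ m * S.det) ^ (-(1 / 2 : ℝ)), ?_, fun j => ?_⟩
    · have := hShatpd.det_pos
      have := hSpd.det_pos
      positivity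
    refine gaussPDF_eq_div_mul_gaussPDF hSpd.det_pos ?_
    rw [hxhat, sub_mulVec_add_mulVec_sub, hShatM, dotProduct_mulVec_mul_mul_transpose_inv hM]
  simp only [hpdf]
  exact mul_const_mul_div_sum w (fun j => gaussPDF y (H *ᵥ xbar j) S) hc i

/-- Equivalent weights under linear measurement models: for a Gaussian mixture prior whose
components all share the same prior covariance, the posterior-linearization weights equal
the traditional prior-linearization weights, and the posterior-linearization innovation
covariance is symmetric positive definite. -/
theorem equivalent_weights_linear
    (n m N : ℕ) (hn : 0 < n) (hm : 0 < m) (hN : 0 < N)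
    (H : Matrix (Fin m) (Fin n) ℝ)
    (R : Matrix (Fin m) (Fin m) ℝ) (hR : R.PosDef)
    (Pbar : Matrix (Fin n) (Fin n) ℝ) (hPbar : Pbar.PosDef)
    (y : Fin m → ℝ)
    (xbar : Fin N → (Fin n → ℝ))
    (w : Fin N → ℝ) (hw : ∀ i, 0 ≤ w i) (hw' : ∃ i, 0 < w i)
    (S : Matrix (Fin m) (Fin m) ℝ) (hS : S = H * Pbar * Hᵀ + R)
    (K : Matrix (Fin n) (Fin m) ℝ) (hK : K = Pbar * Hᵀ * S⁻¹)
    (Phat : Matrix (Fin n) (Fin n) ℝ) (hPhat : Phat = Pbar - K * H * Pbar)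
    (Shat : Matrix (Fin m) (Fin m) ℝ)
    (hShat : Shat = H * Phat * Hᵀ + R - H * K * R - (H * K * R)ᵀ)
    (xhat : Fin N → (Fin n → ℝ))
    (hxhat : ∀ i, xhat i = xbar i + K *ᵥ (y - H *ᵥ xbar i)) :
    Shat.PosDef ∧
      ∀ i, w i * gaussPDF y (H *ᵥ xhat i) Shat /
          (∑ j, w j * gaussPDF y (H *ᵥ xhat j) Shat) =
        w i * gaussPDF y (H *ᵥ xbar i) S /
          (∑ j, w j * gaussPDF y (H *ᵥ xbar j) S) :=
  equivalent_weights_linear_general n m N H R hR Pbar hPbar y xbar w S hS K hK Phat hPhat Shat hShat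
    xhat hxhat
end

section
/- Quadratic-form identity for linear measurement models: with ε̄ = y − H x̄ the prior innovation and ε̂ = y − H x̂ the posterior innovation, where x̂ = x̄ + K (y − H x̄), one has ε̂ᵀ Ŝ⁻¹ ε̂ = ε̄ᵀ S⁻¹ ε̄. -/
/-!
Write `A = H P̄ Hᵀ`, so `S = A + R` and `H K = A S⁻¹`. Then `1 - H K = R S⁻¹`, so the posterior
innovation is `ε̂ = L ε̄` with `L = R S⁻¹`, and `Ŝ` collapses to `R S⁻¹ R = L S Lᵀ`. Since `L` is
invertible, the congruence cancels in the quadratic form: `(L e)ᵀ (L S Lᵀ)⁻¹ (L e) = eᵀ S⁻¹ e`.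
-/

open Matrix

namespace Matrix

variable {ι 𝕜 : Type*} [Fintype ι] [DecidableEq ι] [CommRing 𝕜]

theorem dotProduct_mulVec_inv_conj {L : Matrix ι ι 𝕜} (hL : IsUnit L.det)
    (M : Matrix ι ι 𝕜) (e : ι → 𝕜) :
    (L *ᵥ e) ⬝ᵥ ((L * M * Lᵀ)⁻¹ *ᵥ (L *ᵥ e)) = e ⬝ᵥ (M⁻¹ *ᵥ e) := by
  have hLt : IsUnit Lᵀ.det := by rwa [det_transpose]
  have hconj : Lᵀ * (L * M * Lᵀ)⁻¹ * L = M⁻¹ := by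
    rw [mul_inv_rev, mul_inv_rev, Matrix.mul_assoc, Matrix.mul_assoc,
      mul_nonsing_inv_cancel_left _ _ hLt, Matrix.mul_assoc, nonsing_inv_mul _ hL, Matrix.mul_one]
  rw [mulVec_mulVec, dotProduct_mulVec, dotProduct_mulVec, ← vecMul_transpose, vecMul_vecMul,
    ← Matrix.mul_assoc, hconj]

theorem one_sub_mul_inv_add {A R : Matrix ι ι 𝕜} (h : IsUnit (A + R).det) :
    1 - A * (A + R)⁻¹ = R * (A + R)⁻¹ := by
  rw [← mul_nonsing_inv _ h, Matrix.add_mul]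
  abel

theorem mul_inv_mul_eq_conj {R S : Matrix ι ι 𝕜} (hR : Rᵀ = R) (hS : Sᵀ = S)
    (h : IsUnit S.det) : R * S⁻¹ * R = R * S⁻¹ * S * (R * S⁻¹)ᵀ := by
  rw [transpose_mul, transpose_nonsing_inv, hR, hS, Matrix.mul_assoc _ S,
    mul_nonsing_inv_cancel_left _ _ h]

theorem posterior_innovation_cov_eq_s1 {A R : Matrix ι ι 𝕜} (hA : Aᵀ = A) (hR : Rᵀ = R)
    (h : IsUnit (A + R).det) :
    A - A * (A + R)⁻¹ * A + R - A * (A + R)⁻¹ * R - (A * (A + R)⁻¹ * R)ᵀ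
      = R * (A + R)⁻¹ * R := by
  have hsymm : (A + R)ᵀ = A + R := by rw [transpose_add, hA, hR]
  have hgainT : (A * (A + R)⁻¹ * R)ᵀ = R * (A + R)⁻¹ * A := by
    rw [transpose_mul, transpose_mul, transpose_nonsing_inv, hsymm, hA, hR, Matrix.mul_assoc]
  calc A - A * (A + R)⁻¹ * A + R - A * (A + R)⁻¹ * R - (A * (A + R)⁻¹ * R)ᵀ
      = A - A * (A + R)⁻¹ * (A + R) + R - R * (A + R)⁻¹ * A := by
        rw [hgainT]; noncomm_ring
    _ = R * (A + R)⁻¹ * (A + R) - R * (A + R)⁻¹ * A := by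
        rw [nonsing_inv_mul_cancel_right _ _ h, nonsing_inv_mul_cancel_right _ _ h]; abel
    _ = R * (A + R)⁻¹ * R := by noncomm_ring

end Matrix

theorem quadratic_form_identity_general
    (n m : ℕ)
    (H : Matrix (Fin m) (Fin n) ℝ)
    (R : Matrix (Fin m) (Fin m) ℝ) (hR : R.PosDef)
    (Pbar : Matrix (Fin n) (Fin n) ℝ) (hPbar : Pbar.PosDef)
    (xbar : Fin n → ℝ) (y : Fin m → ℝ)
    (S : Matrix (Fin m) (Fin m) ℝ) (hS : S = H * Pbar * Hᵀ + R)
    (K : Matrix (Fin n) (Fin m) ℝ) (hK : K = Pbar * Hᵀ * S⁻¹)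
    (xhat : Fin n → ℝ) (hxhat : xhat = xbar + K *ᵥ (y - H *ᵥ xbar))
    (Phat : Matrix (Fin n) (Fin n) ℝ) (hPhat : Phat = Pbar - K * H * Pbar)
    (Shat : Matrix (Fin m) (Fin m) ℝ)
    (hShat : Shat = H * Phat * Hᵀ + R - H * K * R - (H * K * R)ᵀ) :
    (y - H *ᵥ xhat) ⬝ᵥ (Shat⁻¹ *ᵥ (y - H *ᵥ xhat)) =
      (y - H *ᵥ xbar) ⬝ᵥ (S⁻¹ *ᵥ (y - H *ᵥ xbar)) := by
  subst hS
  set A := H * Pbar * Hᵀ with hA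
  have hA_psd : A.PosSemidef := by
    simpa only [conjTranspose_eq_transpose_of_trivial] using
      hPbar.posSemidef.mul_mul_conjTranspose_same H
  have hS_pd : (A + R).PosDef := PosDef.posSemidef_add hA_psd hR
  have hS_unit : IsUnit (A + R).det := isUnit_iff_ne_zero.mpr hS_pd.det_pos.ne'
  have hA_symm : Aᵀ = A := hA_psd.isHermitian
  have hR_symm : Rᵀ = R := hR.isHermitian
  have hS_symm : (A + R)ᵀ = A + R := hS_pd.isHermitian
  have hL_unit : IsUnit (R * (A + R)⁻¹).det := by
    rw [det_mul]
    exact (isUnit_iff_ne_zero.mpr hR.det_pos.ne').mul (isUnit_nonsing_inv_det _ hS_unit)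
  have hgain : H * K = A * (A + R)⁻¹ := by
    rw [hK]; simp only [hA, Matrix.mul_assoc]
  have hinnov : y - H *ᵥ xhat = (R * (A + R)⁻¹) *ᵥ (y - H *ᵥ xbar) := by
    rw [hxhat, ← one_sub_mul_inv_add hS_unit, ← hgain, sub_mulVec, one_mulVec, mulVec_add,
      mulVec_mulVec]
    abel
  have hShat_conj : Shat = R * (A + R)⁻¹ * (A + R) * (R * (A + R)⁻¹)ᵀ := by
    rw [← mul_inv_mul_eq_conj hR_symm hS_symm hS_unit,
      ← posterior_innovation_cov_eq_s1 hA_symm hR_symm hS_unit, hShat, hPhat,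
      ← hgain, Matrix.mul_sub, Matrix.sub_mul]
    simp only [hA, Matrix.mul_assoc]
  rw [hinnov, hShat_conj, dotProduct_mulVec_inv_conj hL_unit]

/-- Quadratic-form identity for linear measurement models:
`ε̂ᵀ Ŝ⁻¹ ε̂ = ε̄ᵀ S⁻¹ ε̄` where `ε̄ = y − H x̄`, `ε̂ = y − H x̂`, and
`x̂ = x̄ + K (y − H x̄)`. -/
theorem quadratic_form_identity
    (n m : ℕ) (hn : 0 < n) (hm : 0 < m)
    (H : Matrix (Fin m) (Fin n) ℝ)
    (R : Matrix (Fin m) (Fin m) ℝ) (hR : R.PosDef)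
    (Pbar : Matrix (Fin n) (Fin n) ℝ) (hPbar : Pbar.PosDef)
    (xbar : Fin n → ℝ) (y : Fin m → ℝ)
    (S : Matrix (Fin m) (Fin m) ℝ) (hS : S = H * Pbar * Hᵀ + R)
    (K : Matrix (Fin n) (Fin m) ℝ) (hK : K = Pbar * Hᵀ * S⁻¹)
    (xhat : Fin n → ℝ) (hxhat : xhat = xbar + K *ᵥ (y - H *ᵥ xbar))
    (Phat : Matrix (Fin n) (Fin n) ℝ) (hPhat : Phat = Pbar - K * H * Pbar)
    (Shat : Matrix (Fin m) (Fin m) ℝ)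
    (hShat : Shat = H * Phat * Hᵀ + R - H * K * R - (H * K * R)ᵀ) :
    (y - H *ᵥ xhat) ⬝ᵥ (Shat⁻¹ *ᵥ (y - H *ᵥ xhat)) =
      (y - H *ᵥ xbar) ⬝ᵥ (S⁻¹ *ᵥ (y - H *ᵥ xbar)) :=
  quadratic_form_identity_general n m H R hR Pbar hPbar xbar y S hS K hK xhat hxhat Phat hPhat Shat
    hShat
end

section
/- Closed form of the posterior-linearization innovation covariance in the linear case: Ŝ = H P̂ Hᵀ + R − H K R − (H K R)ᵀ satisfies Ŝ = R S⁻¹ R. -/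
open Matrix

/-- Closed form of the posterior-linearization innovation covariance in the linear case:
`Ŝ = R S⁻¹ R`. -/
theorem Shat_eq_R_Sinv_R
    (n m : ℕ) (hn : 0 < n) (hm : 0 < m)
    (H : Matrix (Fin m) (Fin n) ℝ)
    (R : Matrix (Fin m) (Fin m) ℝ) (hR : R.PosDef)
    (Pbar : Matrix (Fin n) (Fin n) ℝ) (hPbar : Pbar.PosDef)
    (S : Matrix (Fin m) (Fin m) ℝ) (hS : S = H * Pbar * Hᵀ + R)
    (K : Matrix (Fin n) (Fin m) ℝ) (hK : K = Pbar * Hᵀ * S⁻¹)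
    (Phat : Matrix (Fin n) (Fin n) ℝ) (hPhat : Phat = Pbar - K * H * Pbar)
    (Shat : Matrix (Fin m) (Fin m) ℝ)
    (hShat : Shat = H * Phat * Hᵀ + R - H * K * R - (H * K * R)ᵀ) :
    Shat = R * S⁻¹ * R := by
  have hRsym : Rᵀ = R := hR.1
  have hPsym : Pbarᵀ = Pbar := hPbar.1
  set A : Matrix (Fin m) (Fin m) ℝ := H * Pbar * Hᵀ with hA
  have hAsym : Aᵀ = A := by
    simp [hA, Matrix.transpose_mul, hPsym, Matrix.mul_assoc]
  have hSpd : S.PosDef := by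
    rw [hS]
    have : (H * Pbar * Hᵀ).PosSemidef := by
      have := hPbar.posSemidef.mul_mul_conjTranspose_same H
      simpa using this
    exact Matrix.PosDef.posSemidef_add this hR
  have hdet : IsUnit S.det := hSpd.det_pos.ne'.isUnit
  have hSS : S * S⁻¹ = 1 := Matrix.mul_nonsing_inv S hdet
  have hSS' : S⁻¹ * S = 1 := Matrix.nonsing_inv_mul S hdet
  have hSsym : Sᵀ = S := by
    rw [hS, Matrix.transpose_add, hRsym, hAsym]
  have hSinvSym : S⁻¹ᵀ = S⁻¹ := by
    rw [Matrix.transpose_nonsing_inv, hSsym]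
  have hHK : H * K = A * S⁻¹ := by
    rw [hK, hA]; simp only [Matrix.mul_assoc]
  have hHKRt : (H * K * R)ᵀ = R * S⁻¹ * A := by
    rw [hHK, Matrix.transpose_mul, Matrix.transpose_mul, hRsym, hSinvSym, hAsym,
      Matrix.mul_assoc]
  have hHPhat : H * Phat * Hᵀ = A - A * S⁻¹ * A := by
    have hKHP : H * (K * H * Pbar) * Hᵀ = A * S⁻¹ * A := by
      rw [hK, hA]; simp only [Matrix.mul_assoc]
    rw [hPhat, Matrix.mul_sub, Matrix.sub_mul, hKHP, ← hA]
  rw [hShat, hHPhat, hHKRt, hHK]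
  have key : A - A * S⁻¹ * A + R - A * S⁻¹ * R - R * S⁻¹ * A
      = (A + R) - A * S⁻¹ * (A + R) - R * S⁻¹ * A := by noncomm_ring
  rw [key, ← hS, Matrix.mul_assoc A S⁻¹ S, hSS', Matrix.mul_one]
  have : R * S⁻¹ * R = R * S⁻¹ * (S - A) := by
    rw [hS]; noncomm_ring
  rw [this, Matrix.mul_sub, Matrix.mul_assoc R S⁻¹ S, hSS', Matrix.mul_one, hS]
  abel
end

section
/- Positive definiteness of the posterior-linearization innovation covariance: Ŝ = H P̂ Hᵀ + R − H K R − (H K R)ᵀ is a symmetric positive definite matrix. -/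
/-!
Write `S = H P̄ Hᵀ + R`. Then `H K = 1 - R S⁻¹`, and both `H P̂ Hᵀ = (1 - H K) H P̄ Hᵀ` and `H K R`
equal `R - R S⁻¹ R`. Hence `Ŝ = R - (H K R)ᵀ = (R S⁻¹ R)ᵀ`, which is positive definite because
`S⁻¹` is and `R` is an invertible Hermitian matrix.
-/

open Matrix

section Algebra

variable {ι κ α : Type*} [Fintype ι] [Fintype κ] [DecidableEq ι] [CommRing α]
  {H : Matrix ι κ α} {P : Matrix κ κ α} {R S : Matrix ι ι α} {K : Matrix κ ι α}

theorem mul_kalmanGain (hS : S = H * P * Hᵀ + R) (hSdet : IsUnit S.det)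
    (hK : K = P * Hᵀ * S⁻¹) : H * K = 1 - R * S⁻¹ := by
  have hHPH : H * P * Hᵀ = S - R := by rw [hS, add_sub_cancel_right]
  rw [hK, ← Matrix.mul_assoc, ← Matrix.mul_assoc, hHPH, Matrix.sub_mul, mul_nonsing_inv _ hSdet]

theorem mul_kalmanGain_mul (hS : S = H * P * Hᵀ + R) (hSdet : IsUnit S.det)
    (hK : K = P * Hᵀ * S⁻¹) : H * K * R = R - R * S⁻¹ * R := by
  rw [mul_kalmanGain hS hSdet hK, Matrix.sub_mul, Matrix.one_mul]

theorem mul_posteriorCov_mul_transpose (hS : S = H * P * Hᵀ + R) (hSdet : IsUnit S.det)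
    (hK : K = P * Hᵀ * S⁻¹) : H * (P - K * H * P) * Hᵀ = R - R * S⁻¹ * R := by
  have hHPH : H * P * Hᵀ = S - R := by rw [hS, add_sub_cancel_right]
  calc H * (P - K * H * P) * Hᵀ = (1 - H * K) * (H * P * Hᵀ) := by
        simp only [Matrix.mul_sub, Matrix.sub_mul, Matrix.one_mul, Matrix.mul_assoc]
    _ = R * S⁻¹ * (S - R) := by rw [mul_kalmanGain hS hSdet hK, sub_sub_cancel, hHPH]
    _ = R - R * S⁻¹ * R := by
        rw [Matrix.mul_sub, Matrix.mul_assoc R, nonsing_inv_mul _ hSdet, Matrix.mul_one]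

theorem posteriorInnovationCov_eq (hR : Rᵀ = R) (hS : S = H * P * Hᵀ + R) (hSdet : IsUnit S.det)
    (hK : K = P * Hᵀ * S⁻¹) :
    H * (P - K * H * P) * Hᵀ + R - H * K * R - (H * K * R)ᵀ = (R * S⁻¹ * R)ᵀ := by
  rw [mul_posteriorCov_mul_transpose hS hSdet hK, mul_kalmanGain_mul hS hSdet hK,
    transpose_sub, hR]
  abel

end Algebra

section PosDef

variable {ι κ : Type*} [Fintype ι] [Fintype κ]

theorem Matrix.PosDef.mul_inv_mul {𝕜 : Type*} [DecidableEq ι] [Field 𝕜] [PartialOrder 𝕜]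
    [StarRing 𝕜] {R S : Matrix ι ι 𝕜} (hR : R.PosDef) (hS : S.PosDef) : (R * S⁻¹ * R).PosDef := by
  simpa only [hR.isHermitian.eq] using
    hS.inv.conjTranspose_mul_mul_same (mulVec_injective_of_isUnit hR.isUnit)

theorem Matrix.PosDef.mul_mul_transpose_add_s5 {H : Matrix ι κ ℝ} {P : Matrix κ κ ℝ}
    {R : Matrix ι ι ℝ} (hP : P.PosDef) (hR : R.PosDef) : (H * P * Hᵀ + R).PosDef := by
  simpa only [conjTranspose_eq_transpose_of_trivial] using
    PosDef.posSemidef_add (hP.posSemidef.mul_mul_conjTranspose_same H) hR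

end PosDef

theorem Shat_posDef_general
    (n m : ℕ)
    (H : Matrix (Fin m) (Fin n) ℝ)
    (R : Matrix (Fin m) (Fin m) ℝ) (hR : R.PosDef)
    (Pbar : Matrix (Fin n) (Fin n) ℝ) (hPbar : Pbar.PosDef)
    (S : Matrix (Fin m) (Fin m) ℝ) (hS : S = H * Pbar * Hᵀ + R)
    (K : Matrix (Fin n) (Fin m) ℝ) (hK : K = Pbar * Hᵀ * S⁻¹)
    (Phat : Matrix (Fin n) (Fin n) ℝ) (hPhat : Phat = Pbar - K * H * Pbar)
    (Shat : Matrix (Fin m) (Fin m) ℝ)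
    (hShat : Shat = H * Phat * Hᵀ + R - H * K * R - (H * K * R)ᵀ) :
    Shat.PosDef := by
  have hSpos : S.PosDef := hS ▸ hPbar.mul_mul_transpose_add_s5 hR
  have hRsymm : Rᵀ = R := by
    simpa only [conjTranspose_eq_transpose_of_trivial] using hR.isHermitian.eq
  have hSdet : IsUnit S.det := (isUnit_iff_isUnit_det S).mp hSpos.isUnit
  rw [hShat, hPhat, posteriorInnovationCov_eq hRsymm hS hSdet hK]
  exact (hR.mul_inv_mul hSpos).transpose

/-- The posterior-linearization innovation covariance
`Ŝ = H P̂ Hᵀ + R − H K R − (H K R)ᵀ` is symmetric positive definite. -/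
theorem Shat_posDef
    (n m : ℕ) (hn : 0 < n) (hm : 0 < m)
    (H : Matrix (Fin m) (Fin n) ℝ)
    (R : Matrix (Fin m) (Fin m) ℝ) (hR : R.PosDef)
    (Pbar : Matrix (Fin n) (Fin n) ℝ) (hPbar : Pbar.PosDef)
    (S : Matrix (Fin m) (Fin m) ℝ) (hS : S = H * Pbar * Hᵀ + R)
    (K : Matrix (Fin n) (Fin m) ℝ) (hK : K = Pbar * Hᵀ * S⁻¹)
    (Phat : Matrix (Fin n) (Fin n) ℝ) (hPhat : Phat = Pbar - K * H * Pbar)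
    (Shat : Matrix (Fin m) (Fin m) ℝ)
    (hShat : Shat = H * Phat * Hᵀ + R - H * K * R - (H * K * R)ᵀ) :
    Shat.PosDef :=
  Shat_posDef_general n m H R hR Pbar hPbar S hS K hK Phat hPhat Shat hShat
end

section
/- Equivalence of the first and second alternate forms of the improved-weight innovation covariance: for every m×n real matrix Ĥ (playing the role of the Jacobian evaluated at the posterior estimate, with H the Jacobian at the prior estimate), Ĥ P̂ Ĥᵀ + R − Ĥ K R − (Ĥ K R)ᵀ = (Ĥ − H) P̂ (Ĥ − H)ᵀ + R S⁻¹ Rᵀ. -/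
open Matrix

/-- Equivalence of the first and second alternate forms of the improved-weight
innovation covariance. -/
theorem alt_cov_forms_one_two
    (n m : ℕ) (hn : 0 < n) (hm : 0 < m)
    (H : Matrix (Fin m) (Fin n) ℝ)
    (R : Matrix (Fin m) (Fin m) ℝ) (hR : R.PosDef)
    (Pbar : Matrix (Fin n) (Fin n) ℝ) (hPbar : Pbar.PosDef)
    (S : Matrix (Fin m) (Fin m) ℝ) (hS : S = H * Pbar * Hᵀ + R)
    (K : Matrix (Fin n) (Fin m) ℝ) (hK : K = Pbar * Hᵀ * S⁻¹)
    (Phat : Matrix (Fin n) (Fin n) ℝ) (hPhat : Phat = Pbar - K * H * Pbar) :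
    ∀ Hhat : Matrix (Fin m) (Fin n) ℝ,
      Hhat * Phat * Hhatᵀ + R - Hhat * K * R - (Hhat * K * R)ᵀ =
        (Hhat - H) * Phat * (Hhat - H)ᵀ + R * S⁻¹ * Rᵀ := by
  intro Hhat
  have hSpd : S.PosDef := by
    rw [hS]
    exact Matrix.PosDef.posSemidef_add
      (by simpa using hPbar.posSemidef.mul_mul_conjTranspose_same H) hR
  have hSinv : S * S⁻¹ = 1 := Matrix.mul_nonsing_inv S hSpd.det_pos.ne'.isUnit
  have hSinv' : S⁻¹ * S = 1 := Matrix.nonsing_inv_mul S hSpd.det_pos.ne'.isUnit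
  have hRsym : Rᵀ = R := hR.isHermitian.eq
  have hPsym : Pbarᵀ = Pbar := hPbar.isHermitian.eq
  have hSsym : Sᵀ = S := hSpd.isHermitian.eq
  have hSisym : S⁻¹ᵀ = S⁻¹ := by
    rw [Matrix.transpose_nonsing_inv, hSsym]
  have hHP : H * Pbar * Hᵀ = S - R := by rw [hS]; abel
  -- key fact : Pbar * Hᵀ = K * S
  have hKS : K * S = Pbar * Hᵀ := by
    rw [hK, Matrix.mul_assoc, hSinv', Matrix.mul_one]
  -- Phat * Hᵀ = K * R
  have h1 : Phat * Hᵀ = K * R := by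
    have h : K * (H * Pbar * Hᵀ) = K * S - K * R := by
      rw [hHP, Matrix.mul_sub]
    calc Phat * Hᵀ = Pbar * Hᵀ - K * (H * Pbar * Hᵀ) := by
          rw [hPhat, Matrix.sub_mul, Matrix.mul_assoc, Matrix.mul_assoc,
            Matrix.mul_assoc]
      _ = K * R := by rw [h, hKS]; abel
  -- Phat is symmetric
  have hPhsym : Phatᵀ = Phat := by
    rw [hPhat, hK, transpose_sub, hPsym]
    congr 1
    simp only [transpose_mul, transpose_transpose, hPsym, hSisym, Matrix.mul_assoc]
  -- H * Phat * Hᵀ = R - R * S⁻¹ * R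
  have h3 : H * Phat * Hᵀ = R - R * S⁻¹ * R := by
    rw [Matrix.mul_assoc, h1, hK]
    have h : H * (Pbar * Hᵀ * S⁻¹ * R) = (S - R) * S⁻¹ * R := by
      rw [← hHP]; simp only [Matrix.mul_assoc]
    rw [h, Matrix.sub_mul, Matrix.sub_mul, hSinv, Matrix.one_mul]
  -- expand
  have hHPh : Hhat * Phat * Hᵀ = Hhat * K * R := by
    rw [Matrix.mul_assoc, h1, Matrix.mul_assoc]
  have hHPh' : H * Phat * Hhatᵀ = (Hhat * K * R)ᵀ := by
    rw [← hHPh]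
    simp only [transpose_mul, hPhsym, transpose_transpose]
    rw [Matrix.mul_assoc]
  have expand : (Hhat - H) * Phat * (Hhat - H)ᵀ =
      Hhat * Phat * Hhatᵀ - Hhat * Phat * Hᵀ - H * Phat * Hhatᵀ + H * Phat * Hᵀ := by
    simp only [transpose_sub, Matrix.sub_mul, Matrix.mul_sub]
    abel
  rw [expand, hHPh, hHPh', h3, hRsym]
  abel
end

section
/- The Kalman posterior covariance is symmetric positive semidefinite: P̂ = P̄ − K H P̄ is a symmetric positive semidefinite matrix. -/
open Matrix

/-- The Kalman posterior covariance `P̂ = P̄ − K H P̄` is symmetric positive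
semidefinite. -/
theorem Phat_posSemidef
    (n m : ℕ) (hn : 0 < n) (hm : 0 < m)
    (H : Matrix (Fin m) (Fin n) ℝ)
    (R : Matrix (Fin m) (Fin m) ℝ) (hR : R.PosDef)
    (Pbar : Matrix (Fin n) (Fin n) ℝ) (hPbar : Pbar.PosDef)
    (S : Matrix (Fin m) (Fin m) ℝ) (hS : S = H * Pbar * Hᵀ + R)
    (K : Matrix (Fin n) (Fin m) ℝ) (hK : K = Pbar * Hᵀ * S⁻¹)
    (Phat : Matrix (Fin n) (Fin n) ℝ) (hPhat : Phat = Pbar - K * H * Pbar) :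
    Phat.PosSemidef := by
  have hHPH : (H * Pbar * Hᵀ).PosSemidef := by
    simpa [conjTranspose_eq_transpose_of_trivial] using
      hPbar.posSemidef.mul_mul_conjTranspose_same H
  have hSpd : S.PosDef := hS ▸ Matrix.PosDef.posSemidef_add hHPH hR
  have hSinv : S⁻¹.PosDef := hSpd.inv
  have hPsymm : Pbarᵀ = Pbar := hPbar.isHermitian
  have hSinvsymm : (S⁻¹)ᵀ = S⁻¹ := hSinv.isHermitian
  have hSunit : IsUnit S.det := hSpd.det_pos.ne'.isUnit
  have hAS : S⁻¹ * S = 1 := Matrix.nonsing_inv_mul S hSunit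
  have hKt : Kᵀ = S⁻¹ * (H * Pbar) := by
    rw [hK]
    simp [Matrix.transpose_mul, hSinvsymm, hPsymm, Matrix.mul_assoc]
  have key : S⁻¹ * R = 1 - S⁻¹ * (H * Pbar * Hᵀ) := by
    have : R = S - H * Pbar * Hᵀ := by rw [hS]; abel
    rw [this, Matrix.mul_sub, hAS]
  have h2nd : K * R * Kᵀ
      = Pbar * Hᵀ * ((1 - S⁻¹ * (H * Pbar * Hᵀ)) * (S⁻¹ * (H * Pbar))) := by
    rw [hKt, hK, ← key]; simp [Matrix.mul_assoc]
  -- Joseph form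
  have joseph : Phat = (1 - K * H) * Pbar * (1 - K * H)ᵀ + K * R * Kᵀ := by
    rw [hPhat, h2nd, Matrix.transpose_sub, Matrix.transpose_one, Matrix.transpose_mul, hKt, hK]
    simp only [Matrix.sub_mul, Matrix.mul_sub, Matrix.one_mul, Matrix.mul_one, Matrix.mul_assoc]
    abel
  rw [joseph]
  have h4 := hPbar.posSemidef.mul_mul_conjTranspose_same (1 - K * H)
  have h5 := hR.posSemidef.mul_mul_conjTranspose_same K
  rw [conjTranspose_eq_transpose_of_trivial] at h4 h5
  exact h4.add h5
end

section
/- Per-component density ratio in the linear case: with x̂ = x̄ + K (y − H x̄), the posterior-linearization measurement density and the prior-linearization measurement density satisfy N(y; H x̂, Ŝ) = (det S / det R) · N(y; H x̄, S). In particular, for components with differing prior covariances, the ratio of posterior-linearization to prior-linearization component measurement densities equals det S / det R and hence varies with the component's prior covariance. -/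
open Matrix

/-- Per-component density ratio in the linear case:
`N(y; H x̂, Ŝ) = (det S / det R) · N(y; H x̄, S)`. -/
theorem density_ratio_linear
    (n m : ℕ) (hn : 0 < n) (hm : 0 < m)
    (H : Matrix (Fin m) (Fin n) ℝ)
    (R : Matrix (Fin m) (Fin m) ℝ) (hR : R.PosDef)
    (Pbar : Matrix (Fin n) (Fin n) ℝ) (hPbar : Pbar.PosDef)
    (xbar : Fin n → ℝ) (y : Fin m → ℝ)
    (S : Matrix (Fin m) (Fin m) ℝ) (hS : S = H * Pbar * Hᵀ + R)
    (K : Matrix (Fin n) (Fin m) ℝ) (hK : K = Pbar * Hᵀ * S⁻¹)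
    (Phat : Matrix (Fin n) (Fin n) ℝ) (hPhat : Phat = Pbar - K * H * Pbar)
    (Shat : Matrix (Fin m) (Fin m) ℝ)
    (hShat : Shat = H * Phat * Hᵀ + R - H * K * R - (H * K * R)ᵀ)
    (xhat : Fin n → ℝ) (hxhat : xhat = xbar + K *ᵥ (y - H *ᵥ xbar)) :
    gaussPDF y (H *ᵥ xhat) Shat = (S.det / R.det) * gaussPDF y (H *ᵥ xbar) S := by
  -- positivity of S
  have hApsd : (H * Pbar * Hᵀ).PosSemidef := by
    have := hPbar.posSemidef.mul_mul_conjTranspose_same H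
    simpa using this
  have hSpd : S.PosDef := by rw [hS]; exact Matrix.PosDef.posSemidef_add hApsd hR
  have hdetS : 0 < S.det := hSpd.det_pos
  have hdetR : 0 < R.det := hR.det_pos
  have hSu : IsUnit S.det := (Ne.isUnit hdetS.ne')
  have hRu : IsUnit R.det := (Ne.isUnit hdetR.ne')
  -- symmetry
  have hST : Sᵀ = S := by
    have := hSpd.isHermitian
    simpa [Matrix.IsHermitian] using this
  have hRT : Rᵀ = R := by
    have := hR.isHermitian
    simpa [Matrix.IsHermitian] using this
  have hPbT : Pbarᵀ = Pbar := by
    have := hPbar.isHermitian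
    simpa [Matrix.IsHermitian] using this
  have hSinvT : (S⁻¹)ᵀ = S⁻¹ := by rw [Matrix.transpose_nonsing_inv, hST]
  have hA2 : H * Pbar * Hᵀ = S - R := by rw [hS]; abel
  -- H * K
  have hHK : H * K = 1 - R * S⁻¹ := by
    rw [hK]
    calc H * (Pbar * Hᵀ * S⁻¹) = (H * Pbar * Hᵀ) * S⁻¹ := by
          simp [Matrix.mul_assoc]
      _ = (S - R) * S⁻¹ := by rw [hA2]
      _ = 1 - R * S⁻¹ := by rw [Matrix.sub_mul, Matrix.mul_nonsing_inv _ hSu]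
  -- H * K * R = R - R S⁻¹ R
  have h2 : H * K * R = R - R * S⁻¹ * R := by
    rw [hHK, Matrix.sub_mul, Matrix.one_mul, Matrix.mul_assoc]
  have h3 : (H * K * R)ᵀ = R - R * S⁻¹ * R := by
    rw [h2]
    simp [Matrix.transpose_sub, Matrix.transpose_mul, hRT, hSinvT, Matrix.mul_assoc]
  -- H * Phat * Hᵀ
  have h1 : H * Phat * Hᵀ = R - R * S⁻¹ * R := by
    have e1 : H * Phat * Hᵀ = (S - R) - (1 - R * S⁻¹) * (S - R) := by
      rw [hPhat]
      calc H * (Pbar - K * H * Pbar) * Hᵀ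
          = H * Pbar * Hᵀ - (H * K) * (H * Pbar * Hᵀ) := by
            simp [Matrix.mul_sub, Matrix.sub_mul, Matrix.mul_assoc]
        _ = (S - R) - (1 - R * S⁻¹) * (S - R) := by rw [hA2, hHK]
    rw [e1, Matrix.sub_mul, Matrix.one_mul, Matrix.mul_sub,
      Matrix.mul_assoc R S⁻¹ S, Matrix.nonsing_inv_mul _ hSu, Matrix.mul_one]
    abel
  -- Shat = R S⁻¹ R
  have key1 : Shat = R * S⁻¹ * R := by
    rw [hShat, h3, h1, h2]
    abel
  have key2 : Shat⁻¹ = R⁻¹ * S * R⁻¹ := by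
    rw [key1, Matrix.mul_inv_rev, Matrix.mul_inv_rev,
      Matrix.nonsing_inv_nonsing_inv _ hSu, Matrix.mul_assoc]
  -- residual
  set e : Fin m → ℝ := y - H *ᵥ xbar with he
  have hres : y - H *ᵥ xhat = (R * S⁻¹) *ᵥ e := by
    rw [hxhat, Matrix.mulVec_add, Matrix.mulVec_mulVec, hHK, Matrix.sub_mulVec,
      Matrix.one_mulVec]
    simp only [he]
    abel
  -- quadratic form
  have hM : (R⁻¹ * S * R⁻¹) * (R * S⁻¹) = R⁻¹ := by
    rw [Matrix.mul_assoc (R⁻¹ * S) R⁻¹, Matrix.nonsing_inv_mul_cancel_left _ _ hRu,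
      Matrix.mul_assoc, Matrix.mul_nonsing_inv _ hSu, Matrix.mul_one]
  have hquad : ((R * S⁻¹) *ᵥ e) ⬝ᵥ (Shat⁻¹ *ᵥ ((R * S⁻¹) *ᵥ e)) = e ⬝ᵥ (S⁻¹ *ᵥ e) := by
    rw [key2, Matrix.mulVec_mulVec, hM, Matrix.dotProduct_mulVec]
    have hv : ((R * S⁻¹) *ᵥ e) ᵥ* R⁻¹ = S⁻¹ *ᵥ e := by
      rw [← Matrix.mulVec_transpose, Matrix.mulVec_mulVec, Matrix.transpose_nonsing_inv,
        hRT, Matrix.nonsing_inv_mul_cancel_left _ _ hRu]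
    rw [hv, dotProduct_comm]
  -- determinant
  have hdetShat : Shat.det = S.det * (R.det / S.det) ^ 2 := by
    rw [key1, Matrix.det_mul, Matrix.det_mul, Matrix.det_nonsing_inv,
      Ring.inverse_eq_inv]
    field_simp
  -- prefactor
  have hc : (0:ℝ) < (2 * Real.pi) ^ m := by positivity
  have hpre : ((2 * Real.pi) ^ m * Shat.det) ^ (-(1 / 2 : ℝ))
      = (S.det / R.det) * ((2 * Real.pi) ^ m * S.det) ^ (-(1 / 2 : ℝ)) := by
    rw [hdetShat]
    have h1 : (2 * Real.pi) ^ m * (S.det * (R.det / S.det) ^ 2)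
        = ((2 * Real.pi) ^ m * S.det) * (R.det / S.det) ^ 2 := by ring
    rw [h1, Real.mul_rpow (by positivity) (by positivity)]
    have h2 : ((R.det / S.det) ^ 2 : ℝ) ^ (-(1 / 2 : ℝ)) = S.det / R.det := by
      rw [← Real.rpow_natCast (R.det / S.det) 2, ← Real.rpow_mul (by positivity)]
      norm_num
      rw [Real.rpow_neg_one]
      rw [inv_div]
    rw [h2]
    ring
  -- conclude
  unfold gaussPDF
  rw [hres, hquad, hpre]
  ring
end

section
/- Pointwise Gaussian product factorization (exactness of the linear-Gaussian component update): for every x ∈ ℝⁿ, N(y; H x, R) · N(x; x̄, P̄) = N(y; H x̄, S) · N(x; x̂, P̂), where x̂ = x̄ + K (y − H x̄) and where P̂ = P̄ − K H P̄ is symmetric positive definite. -/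
open Matrix

private lemma dot_swap {p q : ℕ} (A : Matrix (Fin p) (Fin q) ℝ) (u : Fin p → ℝ) (v : Fin q → ℝ) :
    u ⬝ᵥ (A *ᵥ v) = v ⬝ᵥ (Aᵀ *ᵥ u) := by
  rw [Matrix.dotProduct_mulVec, ← Matrix.mulVec_transpose, dotProduct_comm]

/-- Pointwise Gaussian product factorization (exactness of the linear-Gaussian component
update): `N(y; H x, R) · N(x; x̄, P̄) = N(y; H x̄, S) · N(x; x̂, P̂)`, with `P̂`
symmetric positive definite. -/
theorem gaussian_product_factorization
    (n m : ℕ) (hn : 0 < n) (hm : 0 < m)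
    (H : Matrix (Fin m) (Fin n) ℝ)
    (R : Matrix (Fin m) (Fin m) ℝ) (hR : R.PosDef)
    (Pbar : Matrix (Fin n) (Fin n) ℝ) (hPbar : Pbar.PosDef)
    (xbar : Fin n → ℝ) (y : Fin m → ℝ)
    (S : Matrix (Fin m) (Fin m) ℝ) (hS : S = H * Pbar * Hᵀ + R)
    (K : Matrix (Fin n) (Fin m) ℝ) (hK : K = Pbar * Hᵀ * S⁻¹)
    (xhat : Fin n → ℝ) (hxhat : xhat = xbar + K *ᵥ (y - H *ᵥ xbar))
    (Phat : Matrix (Fin n) (Fin n) ℝ) (hPhat : Phat = Pbar - K * H * Pbar) :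
    Phat.PosDef ∧
      ∀ x : Fin n → ℝ,
        gaussPDF y (H *ᵥ x) R * gaussPDF x xbar Pbar =
          gaussPDF y (H *ᵥ xbar) S * gaussPDF x xhat Phat := by
  -- positive definiteness of S
  have hSpd : S.PosDef := by
    rw [hS]
    refine Matrix.PosDef.posSemidef_add ?_ hR
    have h0 := Matrix.PosSemidef.mul_mul_conjTranspose_same hPbar.posSemidef H
    rwa [Matrix.conjTranspose_eq_transpose_of_trivial] at h0
  have hRdet : IsUnit R.det := hR.det_pos.ne'.isUnit
  have hPdet : IsUnit Pbar.det := hPbar.det_pos.ne'.isUnit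
  have hSdet : IsUnit S.det := hSpd.det_pos.ne'.isUnit
  -- symmetry facts
  have hPs : Pbarᵀ = Pbar := by
    rw [← Matrix.conjTranspose_eq_transpose_of_trivial]; exact hPbar.isHermitian
  have hRs : Rᵀ = R := by
    rw [← Matrix.conjTranspose_eq_transpose_of_trivial]; exact hR.isHermitian
  have hSs : Sᵀ = S := by
    rw [← Matrix.conjTranspose_eq_transpose_of_trivial]; exact hSpd.isHermitian
  have hSis : S⁻¹ᵀ = S⁻¹ := by rw [Matrix.transpose_nonsing_inv, hSs]
  have hRis : R⁻¹ᵀ = R⁻¹ := by rw [Matrix.transpose_nonsing_inv, hRs]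
  set M : Matrix (Fin n) (Fin n) ℝ := Pbar⁻¹ + Hᵀ * R⁻¹ * H with hM
  have hMpd : M.PosDef := by
    refine Matrix.PosDef.add_posSemidef hPbar.inv ?_
    have h0 := Matrix.PosSemidef.conjTranspose_mul_mul_same hR.inv.posSemidef H
    rwa [Matrix.conjTranspose_eq_transpose_of_trivial] at h0
  have hMdet : IsUnit M.det := hMpd.det_pos.ne'.isUnit
  have hMs : Mᵀ = M := by
    rw [← Matrix.conjTranspose_eq_transpose_of_trivial]; exact hMpd.isHermitian
  -- key matrix identities
  have hMPH : M * (Pbar * Hᵀ) = Hᵀ * R⁻¹ * S := by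
    rw [hM, hS]
    simp only [Matrix.add_mul, Matrix.mul_add, Matrix.mul_assoc,
      Matrix.nonsing_inv_mul_cancel_left _ _ hPdet,
      Matrix.nonsing_inv_mul_cancel_left _ _ hRdet,
      Matrix.nonsing_inv_mul _ hRdet, Matrix.mul_one]
    abel
  have hMK : M * K = Hᵀ * R⁻¹ := by
    rw [hK, ← Matrix.mul_assoc, ← Matrix.mul_assoc, Matrix.mul_assoc M Pbar Hᵀ, hMPH,
      Matrix.mul_nonsing_inv_cancel_right _ _ hSdet]
  have hKS : K * S = Pbar * Hᵀ := by
    rw [hK, Matrix.nonsing_inv_mul_cancel_right _ _ hSdet]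
  have hKt : Kᵀ = S⁻¹ * H * Pbar := by
    rw [hK, Matrix.transpose_mul, Matrix.transpose_mul, hSis, Matrix.transpose_transpose, hPs,
      Matrix.mul_assoc]
  have hHPH : H * Pbar * Hᵀ = S - R := by rw [hS]; abel
  have hKMK : Kᵀ * (Hᵀ * R⁻¹) = R⁻¹ - S⁻¹ := by
    have e0 : Kᵀ * (Hᵀ * R⁻¹) = S⁻¹ * (H * Pbar * Hᵀ) * R⁻¹ := by
      rw [hKt]; simp only [Matrix.mul_assoc]
    rw [e0, hHPH, Matrix.mul_sub, Matrix.sub_mul, Matrix.nonsing_inv_mul _ hSdet,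
      Matrix.one_mul, Matrix.mul_nonsing_inv_cancel_right _ _ hRdet]
  have hPhatM : Phat * M = 1 := by
    have hPM : Pbar * M = 1 + Pbar * Hᵀ * R⁻¹ * H := by
      rw [hM, Matrix.mul_add, Matrix.mul_nonsing_inv _ hPdet]
      simp only [Matrix.mul_assoc]
    have hKPH : K * (H * Pbar * Hᵀ) = Pbar * Hᵀ - K * R := by
      rw [hHPH, Matrix.mul_sub, hKS]
    have hKH : K * H * Pbar * M = Pbar * Hᵀ * R⁻¹ * H := by
      rw [Matrix.mul_assoc (K * H), hPM, Matrix.mul_add, Matrix.mul_one]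
      have e1 : K * H * (Pbar * Hᵀ * R⁻¹ * H) = K * (H * Pbar * Hᵀ) * (R⁻¹ * H) := by
        simp only [Matrix.mul_assoc]
      have e2 : K * R * (R⁻¹ * H) = K * H := by
        rw [Matrix.mul_assoc, Matrix.mul_nonsing_inv_cancel_left _ _ hRdet]
      have e3 : Pbar * Hᵀ * (R⁻¹ * H) = Pbar * Hᵀ * R⁻¹ * H := by
        simp only [Matrix.mul_assoc]
      rw [e1, hKPH, Matrix.sub_mul, e2, e3]
      abel
    rw [hPhat, Matrix.sub_mul, hPM, hKH]
    abel
  have hPhatEq : Phat = M⁻¹ := (Matrix.inv_eq_left_inv hPhatM).symm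
  have hPhatPD : Phat.PosDef := by rw [hPhatEq]; exact hMpd.inv
  have hPhatInv : Phat⁻¹ = M := by rw [hPhatEq, Matrix.nonsing_inv_nonsing_inv _ hMdet]
  -- determinant identity
  have hdet : S.det * Phat.det = R.det * Pbar.det := by
    have h1 : Phat.det * M.det = 1 := by
      rw [← Matrix.det_mul, hPhatM, Matrix.det_one]
    have hPM : Pbar * M = 1 + (Pbar * Hᵀ * R⁻¹) * H := by
      rw [hM, Matrix.mul_add, Matrix.mul_nonsing_inv _ hPdet]
      simp only [Matrix.mul_assoc]
    have h2 : Pbar.det * M.det = S.det * R.det⁻¹ := by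
      rw [← Matrix.det_mul, hPM, Matrix.det_one_add_mul_comm]
      have h3 : (1 : Matrix (Fin m) (Fin m) ℝ) + H * (Pbar * Hᵀ * R⁻¹) = S * R⁻¹ := by
        rw [hS, Matrix.add_mul, Matrix.mul_nonsing_inv _ hRdet]
        simp only [← Matrix.mul_assoc]
        abel
      rw [h3, Matrix.det_mul, Matrix.det_nonsing_inv, Ring.inverse_eq_inv]
    have hRd : R.det ≠ 0 := hRdet.ne_zero
    field_simp at h2
    calc S.det * Phat.det = Pbar.det * M.det * R.det * Phat.det := by rw [h2]
      _ = R.det * Pbar.det * (Phat.det * M.det) := by ring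
      _ = R.det * Pbar.det := by rw [h1, mul_one]
  -- the quadratic-form identity
  have hquad : ∀ (u : Fin m → ℝ) (v : Fin n → ℝ),
      (u + H *ᵥ v) ⬝ᵥ (S⁻¹ *ᵥ (u + H *ᵥ v)) +
        (v - K *ᵥ (u + H *ᵥ v)) ⬝ᵥ (M *ᵥ (v - K *ᵥ (u + H *ᵥ v))) =
      u ⬝ᵥ (R⁻¹ *ᵥ u) + v ⬝ᵥ (Pbar⁻¹ *ᵥ v) := by
    intro u v
    set c : Fin m → ℝ := u + H *ᵥ v with hcd
    have p0 : M *ᵥ (K *ᵥ c) = Hᵀ *ᵥ (R⁻¹ *ᵥ c) := by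
      simp only [Matrix.mulVec_mulVec, hMK]
    have p1 : (K *ᵥ c) ⬝ᵥ (M *ᵥ v) = v ⬝ᵥ (Hᵀ *ᵥ (R⁻¹ *ᵥ c)) := by
      rw [dot_swap M (K *ᵥ c) v, hMs, p0]
    have p2 : v ⬝ᵥ (M *ᵥ (K *ᵥ c)) = v ⬝ᵥ (Hᵀ *ᵥ (R⁻¹ *ᵥ c)) := by rw [p0]
    have p3 : (K *ᵥ c) ⬝ᵥ (M *ᵥ (K *ᵥ c)) = c ⬝ᵥ (R⁻¹ *ᵥ c) - c ⬝ᵥ (S⁻¹ *ᵥ c) := by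
      rw [p0, dotProduct_comm, dot_swap K (Hᵀ *ᵥ (R⁻¹ *ᵥ c)) c]
      simp only [Matrix.mulVec_mulVec]
      rw [hKMK, Matrix.sub_mulVec, dotProduct_sub]
    have q1 : (v - K *ᵥ c) ⬝ᵥ (M *ᵥ (v - K *ᵥ c)) =
        v ⬝ᵥ (M *ᵥ v) - 2 * (v ⬝ᵥ (Hᵀ *ᵥ (R⁻¹ *ᵥ c))) +
          (c ⬝ᵥ (R⁻¹ *ᵥ c) - c ⬝ᵥ (S⁻¹ *ᵥ c)) := by
      rw [Matrix.mulVec_sub, dotProduct_sub, sub_dotProduct, sub_dotProduct, p1, p2, p3]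
      ring
    have q2 : v ⬝ᵥ (M *ᵥ v) =
        v ⬝ᵥ (Pbar⁻¹ *ᵥ v) + v ⬝ᵥ (Hᵀ *ᵥ (R⁻¹ *ᵥ (H *ᵥ v))) := by
      rw [hM, Matrix.add_mulVec, dotProduct_add]
      simp only [← Matrix.mulVec_mulVec, Matrix.mul_assoc]
    have q4 : v ⬝ᵥ (Hᵀ *ᵥ (R⁻¹ *ᵥ u)) = u ⬝ᵥ (R⁻¹ *ᵥ (H *ᵥ v)) := by
      simp only [Matrix.mulVec_mulVec]
      rw [dot_swap (Hᵀ * R⁻¹) v u, Matrix.transpose_mul, Matrix.transpose_transpose, hRis]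
    have q3 : v ⬝ᵥ (Hᵀ *ᵥ (R⁻¹ *ᵥ c)) =
        u ⬝ᵥ (R⁻¹ *ᵥ (H *ᵥ v)) + v ⬝ᵥ (Hᵀ *ᵥ (R⁻¹ *ᵥ (H *ᵥ v))) := by
      rw [hcd, Matrix.mulVec_add, Matrix.mulVec_add, dotProduct_add, q4]
    have q5 : c ⬝ᵥ (R⁻¹ *ᵥ c) =
        u ⬝ᵥ (R⁻¹ *ᵥ u) + 2 * (u ⬝ᵥ (R⁻¹ *ᵥ (H *ᵥ v))) +
          v ⬝ᵥ (Hᵀ *ᵥ (R⁻¹ *ᵥ (H *ᵥ v))) := by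
      rw [hcd, Matrix.mulVec_add, dotProduct_add, add_dotProduct, add_dotProduct]
      have r1 : (H *ᵥ v) ⬝ᵥ (R⁻¹ *ᵥ u) = u ⬝ᵥ (R⁻¹ *ᵥ (H *ᵥ v)) := by
        rw [dot_swap R⁻¹ (H *ᵥ v) u, hRis]
      have r2 : (H *ᵥ v) ⬝ᵥ (R⁻¹ *ᵥ (H *ᵥ v)) = v ⬝ᵥ (Hᵀ *ᵥ (R⁻¹ *ᵥ (H *ᵥ v))) := by
        rw [dotProduct_comm, dot_swap H (R⁻¹ *ᵥ (H *ᵥ v)) v]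
      rw [r1, r2]
      ring
    rw [q1, q2, q3, q5]
    ring
  refine ⟨hPhatPD, fun x => ?_⟩
  have hc : y - H *ᵥ xbar = (y - H *ᵥ x) + H *ᵥ (x - xbar) := by
    rw [Matrix.mulVec_sub]; abel
  have hd : x - xhat = (x - xbar) - K *ᵥ (y - H *ᵥ xbar) := by
    rw [hxhat]; abel
  have hE : (y - H *ᵥ x) ⬝ᵥ (R⁻¹ *ᵥ (y - H *ᵥ x)) +
      (x - xbar) ⬝ᵥ (Pbar⁻¹ *ᵥ (x - xbar)) =
      (y - H *ᵥ xbar) ⬝ᵥ (S⁻¹ *ᵥ (y - H *ᵥ xbar)) +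
        (x - xhat) ⬝ᵥ (Phat⁻¹ *ᵥ (x - xhat)) := by
    rw [hPhatInv, hd, hc]
    exact (hquad (y - H *ᵥ x) (x - xbar)).symm
  have h2pi : (0 : ℝ) < 2 * Real.pi := by positivity
  have hb1 : (0 : ℝ) ≤ (2 * Real.pi) ^ m * R.det :=
    mul_nonneg (pow_nonneg h2pi.le m) hR.det_pos.le
  have hb2 : (0 : ℝ) ≤ (2 * Real.pi) ^ n * Pbar.det :=
    mul_nonneg (pow_nonneg h2pi.le n) hPbar.det_pos.le
  have hb3 : (0 : ℝ) ≤ (2 * Real.pi) ^ m * S.det :=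
    mul_nonneg (pow_nonneg h2pi.le m) hSpd.det_pos.le
  have hb4 : (0 : ℝ) ≤ (2 * Real.pi) ^ n * Phat.det :=
    mul_nonneg (pow_nonneg h2pi.le n) hPhatPD.det_pos.le
  simp only [gaussPDF]
  rw [mul_mul_mul_comm, mul_mul_mul_comm (((2 * Real.pi) ^ m * S.det) ^ (-(1 / 2 : ℝ)))]
  congr 1
  · rw [← Real.mul_rpow hb1 hb2, ← Real.mul_rpow hb3 hb4]
    congr 1
    linear_combination ((2 * Real.pi) ^ m * (2 * Real.pi) ^ n) * hdet.symm
  · rw [← Real.exp_add, ← Real.exp_add]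
    congr 1
    linear_combination (-(1 / 2 : ℝ)) * hE
end

section
/- Exact Gaussian-sum posterior for linear, Gaussian mixture systems: let the prior density be the Gaussian mixture ∑_{i=1}^N w_i N(x; x̄_i, P̄_i) with weights w_i ≥ 0, at least one positive, means x̄_i ∈ ℝⁿ, and symmetric positive definite covariances P̄_i, and let the likelihood be N(y; H x, R). For each i set S_i = H P̄_i Hᵀ + R, K_i = P̄_i Hᵀ S_i⁻¹, x̂_i = x̄_i + K_i (y − H x̄_i), and P̂_i = P̄_i − K_i H P̄_i. Then for every x ∈ ℝⁿ, (∑_{i=1}^N w_i N(y; H x, R) N(x; x̄_i, P̄_i)) / (∑_{j=1}^N w_j N(y; H x̄_j, S_j)) = ∑_{i=1}^N ŵ_i N(x; x̂_i, P̂_i), where ŵ_i = w_i N(y; H x̄_i, S_i) / (∑_{j=1}^N w_j N(y; H x̄_j, S_j)); that is, the exact Bayesian posterior is a Gaussian mixture whose components are the Kalman-updated components (with positive definite covariances P̂_i) and whose weights are proportional to w_i N(y; H x̄_i, S_i). -/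
open Matrix

/-!
Each mixture component is treated separately: for `x ~ N(x̄, P)` and `y | x ~ N(Hx, R)` the joint
density factors as `N(y; H x̄, S) · N(x; x̂, P̂)`. The exponents agree by completing the square in
`x`, since by the Woodbury identity `P̂⁻¹ = P⁻¹ + Hᵀ R⁻¹ H`; the normalising constants agree because
`det S · det P̂ = det R · det P`, which is Sylvester's determinant identity. Dividing the sum of the
factored components by `∑ⱼ wⱼ N(y; H x̄ⱼ, Sⱼ)` gives the posterior mixture.
-/

namespace Matrix

variable {α : Type*} [CommRing α] {m n : Type*} [Fintype m] [Fintype n] [DecidableEq m]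
  [DecidableEq n] (H : Matrix m n α) (P : Matrix n n α) (R : Matrix m m α)

noncomputable def kalmanGain : Matrix n m α := P * Hᵀ * (H * P * Hᵀ + R)⁻¹

variable {H P R}

omit [DecidableEq n] in
theorem mul_kalmanGain (hS : IsUnit (H * P * Hᵀ + R).det) :
    H * kalmanGain H P R = 1 - R * (H * P * Hᵀ + R)⁻¹ := by
  rw [kalmanGain, ← Matrix.mul_assoc, ← Matrix.mul_assoc, eq_sub_iff_add_eq, ← Matrix.add_mul,
    mul_nonsing_inv _ hS]

theorem det_mul_det_sub_kalmanGain_mul_mul (hS : IsUnit (H * P * Hᵀ + R).det) :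
    (H * P * Hᵀ + R).det * (P - kalmanGain H P R * H * P).det = R.det * P.det := by
  have hfactor : P - kalmanGain H P R * H * P =
      P * (1 - Hᵀ * (H * P * Hᵀ + R)⁻¹ * (H * P)) := by
    simp only [kalmanGain, Matrix.mul_sub, Matrix.mul_one, Matrix.mul_assoc]
  have hcomm : H * P * (Hᵀ * (H * P * Hᵀ + R)⁻¹) = H * kalmanGain H P R := by
    simp only [kalmanGain, Matrix.mul_assoc]
  rw [hfactor, det_mul, det_one_sub_mul_comm, hcomm, mul_kalmanGain hS, sub_sub_cancel, det_mul,
    det_nonsing_inv]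
  linear_combination R.det * P.det * Ring.mul_inverse_cancel _ hS

theorem inv_add_transpose_mul_inv_mul (hP : IsUnit P.det) (hR : IsUnit R.det)
    (hS : IsUnit (H * P * Hᵀ + R).det) :
    (P⁻¹ + Hᵀ * R⁻¹ * H)⁻¹ = P - kalmanGain H P R * H * P := by
  rw [add_mul_mul_inv_eq_sub _ _ _ _ ((isUnit_iff_isUnit_det _).2 (isUnit_nonsing_inv_det _ hP))
    ((isUnit_iff_isUnit_det _).2 (isUnit_nonsing_inv_det _ hR)), nonsing_inv_nonsing_inv _ hP,
    nonsing_inv_nonsing_inv _ hR, add_comm R, kalmanGain]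
  rwa [nonsing_inv_nonsing_inv _ hP, nonsing_inv_nonsing_inv _ hR, add_comm R, isUnit_iff_isUnit_det]

theorem inv_sub_kalmanGain_mul_mul (hP : IsUnit P.det) (hR : IsUnit R.det)
    (hS : IsUnit (H * P * Hᵀ + R).det) :
    (P - kalmanGain H P R * H * P)⁻¹ = P⁻¹ + Hᵀ * R⁻¹ * H := by
  have hdet : IsUnit (P - kalmanGain H P R * H * P).det :=
    isUnit_of_mul_isUnit_right ((det_mul_det_sub_kalmanGain_mul_mul hS).symm ▸ hR.mul hP)
  rw [← inv_add_transpose_mul_inv_mul hP hR hS] at hdet ⊢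
  exact nonsing_inv_nonsing_inv _ (isUnit_nonsing_inv_det_iff.1 hdet)

omit [DecidableEq m] [DecidableEq n] in
theorem mulVec_dotProduct (A : Matrix m n α) (v : n → α) (x : m → α) :
    (A *ᵥ v) ⬝ᵥ x = v ⬝ᵥ (Aᵀ *ᵥ x) := by
  rw [dotProduct_comm, dotProduct_transpose_mulVec]

theorem inv_add_transpose_mul_inv_mul_mul_kalmanGain (hP : IsUnit P.det) (hR : IsUnit R.det)
    (hS : IsUnit (H * P * Hᵀ + R).det) :
    (P⁻¹ + Hᵀ * R⁻¹ * H) * kalmanGain H P R = Hᵀ * R⁻¹ := by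
  have hHK := mul_kalmanGain hS
  rw [kalmanGain] at hHK ⊢
  simp only [Matrix.add_mul, Matrix.mul_assoc] at hHK ⊢
  rw [nonsing_inv_mul_cancel_left _ _ hP, hHK, Matrix.mul_sub, Matrix.mul_one,
    nonsing_inv_mul_cancel_left _ _ hR, Matrix.mul_sub, add_sub_cancel]

theorem quadratic_add_quadratic_eq_kalman (hPs : P.IsSymm) (hRs : R.IsSymm) (hP : IsUnit P.det)
    (hR : IsUnit R.det) (hS : IsUnit (H * P * Hᵀ + R).det) (u : m → α) (v : n → α) :
    (u - H *ᵥ v) ⬝ᵥ (R⁻¹ *ᵥ (u - H *ᵥ v)) + v ⬝ᵥ (P⁻¹ *ᵥ v) =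
      u ⬝ᵥ ((H * P * Hᵀ + R)⁻¹ *ᵥ u) + (v - kalmanGain H P R *ᵥ u) ⬝ᵥ
        ((P - kalmanGain H P R * H * P)⁻¹ *ᵥ (v - kalmanGain H P R *ᵥ u)) := by
  rw [inv_sub_kalmanGain_mul_mul hP hR hS]
  set S := H * P * Hᵀ + R
  set K := kalmanGain H P R
  set M := P⁻¹ + Hᵀ * R⁻¹ * H
  have hRinv : R⁻¹ᵀ = R⁻¹ := by rw [transpose_nonsing_inv, hRs.eq]
  have hSs : Sᵀ = S := by simp [S, hPs.eq, hRs.eq, Matrix.mul_assoc]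
  have hMs : Mᵀ = M := by simp [M, transpose_nonsing_inv, hPs.eq, hRs.eq, Matrix.mul_assoc]
  have hMK : M * K = Hᵀ * R⁻¹ := inv_add_transpose_mul_inv_mul_mul_kalmanGain hP hR hS
  have hKM : Kᵀ * M = R⁻¹ * H := by
    rw [← hMs, ← transpose_mul, hMK, transpose_mul, hRinv, transpose_transpose]
  have hKHR : Kᵀ * (Hᵀ * R⁻¹) = R⁻¹ - S⁻¹ := by
    rw [← Matrix.mul_assoc, ← transpose_mul, mul_kalmanGain hS, transpose_sub, transpose_one,
      transpose_mul, transpose_nonsing_inv, hSs, hRs.eq, Matrix.sub_mul, Matrix.one_mul,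
      Matrix.mul_assoc, mul_nonsing_inv _ hR, Matrix.mul_one]
  have hHRH : Hᵀ * (R⁻¹ * H) = M - P⁻¹ := by
    rw [← Matrix.mul_assoc]; exact (add_sub_cancel_left _ _).symm
  simp only [mulVec_sub, dotProduct_sub, sub_dotProduct, mulVec_dotProduct, mulVec_mulVec]
  rw [hHRH, hKM, hMK, hKHR]
  simp only [sub_mulVec, dotProduct_sub]
  ring

end Matrix

namespace Matrix.PosDef

variable {m n : Type*} [Fintype m] [Fintype n] [DecidableEq m] [DecidableEq n]
  {P : Matrix n n ℝ} {R : Matrix m m ℝ}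

omit [DecidableEq m] [DecidableEq n] in
theorem mul_mul_transpose_add_s16 (hP : P.PosDef) (hR : R.PosDef) (H : Matrix m n ℝ) :
    (H * P * Hᵀ + R).PosDef := by
  simpa using Matrix.PosDef.posSemidef_add (hP.posSemidef.mul_mul_conjTranspose_same H) hR

theorem sub_kalmanGain_mul_mul (hP : P.PosDef) (hR : R.PosDef) (H : Matrix m n ℝ) :
    (P - kalmanGain H P R * H * P).PosDef := by
  rw [← inv_add_transpose_mul_inv_mul ((isUnit_iff_isUnit_det _).1 hP.isUnit)
    ((isUnit_iff_isUnit_det _).1 hR.isUnit)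
    ((isUnit_iff_isUnit_det _).1 (hP.mul_mul_transpose_add_s16 hR H).isUnit)]
  refine (hP.inv.add_posSemidef ?_).inv
  simpa using hR.inv.posSemidef.conjTranspose_mul_mul_same H

end Matrix.PosDef

theorem gaussPDF_mul_gaussPDF_eq_of {m n : ℕ} {a a' c c' : Fin m → ℝ} {b b' d d' : Fin n → ℝ}
    {A C : Matrix (Fin m) (Fin m) ℝ} {B D : Matrix (Fin n) (Fin n) ℝ}
    (hA : 0 ≤ A.det) (hB : 0 ≤ B.det) (hC : 0 ≤ C.det) (hD : 0 ≤ D.det)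
    (hdet : A.det * B.det = C.det * D.det)
    (hquad : (a - a') ⬝ᵥ (A⁻¹ *ᵥ (a - a')) + (b - b') ⬝ᵥ (B⁻¹ *ᵥ (b - b')) =
      (c - c') ⬝ᵥ (C⁻¹ *ᵥ (c - c')) + (d - d') ⬝ᵥ (D⁻¹ *ᵥ (d - d'))) :
    gaussPDF a a' A * gaussPDF b b' B = gaussPDF c c' C * gaussPDF d d' D := by
  have hnorm : (2 * Real.pi) ^ m * A.det * ((2 * Real.pi) ^ n * B.det) =
      (2 * Real.pi) ^ m * C.det * ((2 * Real.pi) ^ n * D.det) := by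
    linear_combination (2 * Real.pi) ^ m * (2 * Real.pi) ^ n * hdet
  simp only [gaussPDF]
  rw [mul_mul_mul_comm, ← Real.mul_rpow (by positivity) (by positivity), ← Real.exp_add,
    ← mul_add, hnorm, hquad, mul_add, Real.exp_add, Real.mul_rpow (by positivity) (by positivity),
    mul_mul_mul_comm]

theorem gaussPDF_mul_gaussPDF_eq_kalman {m n : ℕ} (H : Matrix (Fin m) (Fin n) ℝ)
    {R : Matrix (Fin m) (Fin m) ℝ} (hR : R.PosDef) {P : Matrix (Fin n) (Fin n) ℝ} (hP : P.PosDef)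
    (y : Fin m → ℝ) (xb x : Fin n → ℝ) :
    gaussPDF y (H *ᵥ x) R * gaussPDF x xb P =
      gaussPDF y (H *ᵥ xb) (H * P * Hᵀ + R) *
        gaussPDF x (xb + kalmanGain H P R *ᵥ (y - H *ᵥ xb)) (P - kalmanGain H P R * H * P) := by
  have hS := hP.mul_mul_transpose_add_s16 hR H
  have hPhat := hP.sub_kalmanGain_mul_mul hR H
  have hunit {k : ℕ} {A : Matrix (Fin k) (Fin k) ℝ} (hA : A.PosDef) : IsUnit A.det :=
    (isUnit_iff_isUnit_det _).1 hA.isUnit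
  refine gaussPDF_mul_gaussPDF_eq_of hR.det_pos.le hP.det_pos.le hS.det_pos.le hPhat.det_pos.le
    (by rw [det_mul_det_sub_kalmanGain_mul_mul (hunit hS), mul_comm]) ?_
  have hy : y - H *ᵥ x = (y - H *ᵥ xb) - H *ᵥ (x - xb) := by rw [mulVec_sub]; abel
  have hx : x - (xb + kalmanGain H P R *ᵥ (y - H *ᵥ xb)) =
      (x - xb) - kalmanGain H P R *ᵥ (y - H *ᵥ xb) := by abel
  rw [hy, hx]
  exact quadratic_add_quadratic_eq_kalman (isHermitian_iff_isSymm.1 hP.isHermitian)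
    (isHermitian_iff_isSymm.1 hR.isHermitian) (hunit hP) (hunit hR) (hunit hS) _ _

theorem exact_gaussian_sum_posterior_general
    (n m N : ℕ)
    (H : Matrix (Fin m) (Fin n) ℝ)
    (R : Matrix (Fin m) (Fin m) ℝ) (hR : R.PosDef)
    (y : Fin m → ℝ)
    (w : Fin N → ℝ)
    (xbar : Fin N → (Fin n → ℝ))
    (Pbar : Fin N → Matrix (Fin n) (Fin n) ℝ) (hPbar : ∀ i, (Pbar i).PosDef)
    (S : Fin N → Matrix (Fin m) (Fin m) ℝ) (hS : ∀ i, S i = H * Pbar i * Hᵀ + R)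
    (K : Fin N → Matrix (Fin n) (Fin m) ℝ) (hK : ∀ i, K i = Pbar i * Hᵀ * (S i)⁻¹)
    (xhat : Fin N → (Fin n → ℝ))
    (hxhat : ∀ i, xhat i = xbar i + K i *ᵥ (y - H *ᵥ xbar i))
    (Phat : Fin N → Matrix (Fin n) (Fin n) ℝ)
    (hPhat : ∀ i, Phat i = Pbar i - K i * H * Pbar i)
    (what : Fin N → ℝ)
    (hwhat : ∀ i, what i = w i * gaussPDF y (H *ᵥ xbar i) (S i) /
      (∑ j, w j * gaussPDF y (H *ᵥ xbar j) (S j))) :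
    (∀ i, (Phat i).PosDef) ∧
      ∀ x : Fin n → ℝ,
        (∑ i, w i * (gaussPDF y (H *ᵥ x) R * gaussPDF x (xbar i) (Pbar i))) /
            (∑ j, w j * gaussPDF y (H *ᵥ xbar j) (S j)) =
          ∑ i, what i * gaussPDF x (xhat i) (Phat i) := by
  have hK' (i : Fin N) : K i = kalmanGain H (Pbar i) R := by rw [hK, hS]; rfl
  refine ⟨fun i => ?_, fun x => ?_⟩
  · rw [hPhat, hK']
    exact (hPbar i).sub_kalmanGain_mul_mul hR H
  · rw [Finset.sum_div]
    refine Finset.sum_congr rfl fun i _ => ?_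
    rw [gaussPDF_mul_gaussPDF_eq_kalman H hR (hPbar i), hwhat, hxhat, hPhat, hK', hS]
    ring

/-- Exact Gaussian-sum posterior for linear, Gaussian mixture systems: the exact Bayesian
posterior of a Gaussian mixture prior under a linear-Gaussian likelihood is the Gaussian
mixture of the Kalman-updated components, with weights proportional to
`w_i N(y; H x̄_i, S_i)`. -/
theorem exact_gaussian_sum_posterior
    (n m N : ℕ) (hn : 0 < n) (hm : 0 < m) (hN : 0 < N)
    (H : Matrix (Fin m) (Fin n) ℝ)
    (R : Matrix (Fin m) (Fin m) ℝ) (hR : R.PosDef)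
    (y : Fin m → ℝ)
    (w : Fin N → ℝ) (hw : ∀ i, 0 ≤ w i) (hw' : ∃ i, 0 < w i)
    (xbar : Fin N → (Fin n → ℝ))
    (Pbar : Fin N → Matrix (Fin n) (Fin n) ℝ) (hPbar : ∀ i, (Pbar i).PosDef)
    (S : Fin N → Matrix (Fin m) (Fin m) ℝ) (hS : ∀ i, S i = H * Pbar i * Hᵀ + R)
    (K : Fin N → Matrix (Fin n) (Fin m) ℝ) (hK : ∀ i, K i = Pbar i * Hᵀ * (S i)⁻¹)
    (xhat : Fin N → (Fin n → ℝ))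
    (hxhat : ∀ i, xhat i = xbar i + K i *ᵥ (y - H *ᵥ xbar i))
    (Phat : Fin N → Matrix (Fin n) (Fin n) ℝ)
    (hPhat : ∀ i, Phat i = Pbar i - K i * H * Pbar i)
    (what : Fin N → ℝ)
    (hwhat : ∀ i, what i = w i * gaussPDF y (H *ᵥ xbar i) (S i) /
      (∑ j, w j * gaussPDF y (H *ᵥ xbar j) (S j))) :
    (∀ i, (Phat i).PosDef) ∧
      ∀ x : Fin n → ℝ,
        (∑ i, w i * (gaussPDF y (H *ᵥ x) R * gaussPDF x (xbar i) (Pbar i))) /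
            (∑ j, w j * gaussPDF y (H *ᵥ xbar j) (S j)) =
          ∑ i, what i * gaussPDF x (xhat i) (Phat i) :=
  exact_gaussian_sum_posterior_general n m N H R hR y w xbar Pbar hPbar S hS K hK xhat hxhat Phat
    hPhat what hwhat
end
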